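/- Let S ∈ DOM[z] satisfy S = A_R(z+S) − R·S, where A_R(w) = ∑_{n≥1} R^n w^n and R > 1. Then S satisfies the quadratic equation (R+R²)S² + (R²z + Rz − 1)S + Rz = 0, and S has a strictly positive radius of convergence. -/

import Mathlib

def DomSeq (a : ℕ → ℝ) : Prop := a 0 = 0 ∧ ∀ n, 0 ≤ a n

/-- The `n`-th coefficient of `A_R(z + S) = ∑_{m ≥ 1} R^m (z + S(z))^m`. -/
noncomputable def ARcoeff (R : ℝ) (S : ℕ → ℝ) (n : ℕ) : ℝ :=
  ∑ m ∈ Finset.Icc 1 n,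
    R ^ m * PowerSeries.coeff n ((PowerSeries.X + PowerSeries.mk S) ^ m)

/-! Write `q = R (z + S)`. The hypothesis says that `(1 + R) S = ∑_{m ≥ 1} q ^ m = q / (1 - q)`,
and multiplying by `1 - q` gives the quadratic. Writing `S = z T`, the quadratic becomes
`T = R + (R + R²) z (T² + T)`, a Catalan-type recurrence: by induction `2 (R + R²) T_n` is at most
`K ^ (n + 1)` times the `n`-th Catalan number, for `K = 2 (R + R²) R`, and Catalan numbers grow
at most like `4 ^ n`. -/

open PowerSeries
open Finset hiding mk

namespace PowerSeries

variable {A : Type*} [CommRing A] {q : A⟦X⟧}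

theorem coeff_pow_eq_zero_of_lt (hq : constantCoeff q = 0) {n m : ℕ} (h : n < m) :
    coeff n (q ^ m) = 0 :=
  X_pow_dvd_iff.1 (pow_dvd_pow_of_dvd (X_dvd_iff.2 hq) m) n h

theorem sum_Ico_coeff_pow_eq_sum_Icc (hq : constantCoeff q = 0) {n N : ℕ} (h : n < N) :
    ∑ m ∈ Ico 1 N, coeff n (q ^ m) = ∑ m ∈ Icc 1 n, coeff n (q ^ m) := by
  refine (sum_subset (fun m hm => ?_) fun m hm hm' => ?_).symm
  · simp only [mem_Icc, mem_Ico] at hm ⊢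
    omega
  · simp only [mem_Icc, mem_Ico] at hm hm'
    exact coeff_pow_eq_zero_of_lt hq (by omega)

theorem mul_one_sub_eq_of_coeff_eq_sum_pow (hq : constantCoeff q = 0) {F : A⟦X⟧}
    (hF : ∀ n, coeff n F = ∑ m ∈ Icc 1 n, coeff n (q ^ m)) : F * (1 - q) = q := by
  ext n
  set G := ∑ m ∈ Ico 1 (n + 2), q ^ m
  have hFG : X ^ (n + 1) ∣ F - G := X_pow_dvd_iff.2 fun k hk => by
    rw [map_sub, hF, map_sum, sum_Ico_coeff_pow_eq_sum_Icc hq (by omega), sub_self]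
  have hG : G * (1 - q) = q - q ^ (n + 2) := by
    simpa only [pow_one] using geom_sum_Ico_mul_neg q (by omega : 1 ≤ n + 2)
  calc coeff n (F * (1 - q))
      = coeff n ((F - G) * (1 - q)) + coeff n (G * (1 - q)) := by
        rw [← map_add, ← add_mul, sub_add_cancel]
    _ = coeff n q := by
      rw [X_pow_dvd_iff.1 (dvd_mul_of_dvd_left hFG _) n (by omega), hG, map_sub,
        coeff_pow_eq_zero_of_lt hq (by omega), zero_add, sub_zero]

end PowerSeries

theorem ARcoeff_eq_sum_coeff_pow (R : ℝ) (S : ℕ → ℝ) (n : ℕ) :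
    ARcoeff R S n = ∑ m ∈ Icc 1 n, coeff n ((C R * (X + mk S)) ^ m) := by
  simp only [ARcoeff, mul_pow, ← map_pow, coeff_C_mul]

theorem quadratic_of_eq_ARcoeff {R : ℝ} {S : ℕ → ℝ} (hS0 : S 0 = 0)
    (heq : ∀ n, S n = ARcoeff R S n - R * S n) :
    C (R + R ^ 2) * mk S ^ 2 + (C (R ^ 2) * X + C R * X - 1) * mk S + C R * X = 0 := by
  have hgeom : C (1 + R) * mk S * (1 - C R * (X + mk S)) = C R * (X + mk S) := by
    refine mul_one_sub_eq_of_coeff_eq_sum_pow (by simp [hS0]) fun n => ?_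
    rw [coeff_C_mul, coeff_mk, ← ARcoeff_eq_sum_coeff_pow]
    linarith [heq n]
  simp only [map_add, map_one, map_pow] at hgeom ⊢
  linear_combination -hgeom

theorem recurrence_of_quadratic {R : ℝ} {S : ℕ → ℝ} (hS0 : S 0 = 0)
    (hquad : C (R + R ^ 2) * mk S ^ 2 + (C (R ^ 2) * X + C R * X - 1) * mk S + C R * X = 0) :
    S 1 = R ∧ ∀ n, S (n + 2) =
      (R + R ^ 2) * (∑ p ∈ antidiagonal n, S (p.1 + 1) * S (p.2 + 1) + S (n + 1)) := by
  set T := mk fun n => S (n + 1)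
  have hST : mk S = X * T := by
    simpa [hS0] using eq_X_mul_shift_add_const (mk S)
  have hT : T = C R + C (R + R ^ 2) * X * (T ^ 2 + T) := by
    refine X_mul_cancel ?_
    rw [hST] at hquad
    rw [map_add] at hquad ⊢
    linear_combination -hquad
  refine ⟨by simpa [T] using congrArg (coeff 0) hT, fun n => ?_⟩
  have hcoeff := congrArg (coeff (n + 1)) hT
  rw [mul_assoc, map_add, coeff_C_mul, coeff_succ_X_mul, coeff_C, if_neg n.succ_ne_zero,
    zero_add, map_add, sq T, coeff_mul] at hcoeff
  simpa [T] using hcoeff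

theorem catalan_le_four_pow (n : ℕ) : catalan n ≤ 4 ^ n :=
  calc catalan n ≤ (n + 1) * catalan n := Nat.le_mul_of_pos_left _ n.succ_pos
    _ = n.centralBinom := succ_mul_catalan_eq_centralBinom n
    _ ≤ 4 ^ n := Nat.centralBinom_le_four_pow n

theorem catalan_le_catalan_succ (n : ℕ) : catalan n ≤ catalan (n + 1) := by
  rw [catalan_succ']
  simpa [catalan_zero] using
    single_le_sum (f := fun p : ℕ × ℕ => catalan p.1 * catalan p.2) (fun _ _ => Nat.zero_le _)
      (show (0, n) ∈ antidiagonal n by simp)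

theorem le_pow_mul_catalan_of_recurrence {a K : ℝ} {t : ℕ → ℝ} (ht : ∀ n, 0 ≤ t n)
    (ha : 0 ≤ a) (haK : 2 * a ≤ K) (h0 : 2 * a * t 0 ≤ K)
    (hrec : ∀ n, t (n + 1) ≤ a * (∑ p ∈ antidiagonal n, t p.1 * t p.2 + t n)) (n : ℕ) :
    2 * a * t n ≤ K ^ (n + 1) * catalan n := by
  induction n using Nat.strong_induction_on with
  | _ n ih =>
    cases n with
    | zero => simpa [catalan_zero] using h0
    | succ n =>
      have hK : 0 ≤ K := by linarith
      have hsum : ∑ p ∈ antidiagonal n, (2 * a * t p.1) * (2 * a * t p.2) ≤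
          K ^ (n + 2) * catalan (n + 1) := by
        rw [catalan_succ', Nat.cast_sum, mul_sum]
        refine sum_le_sum fun p hp => ?_
        have hpn := mem_antidiagonal.1 hp
        calc (2 * a * t p.1) * (2 * a * t p.2)
            ≤ (K ^ (p.1 + 1) * catalan p.1) * (K ^ (p.2 + 1) * catalan p.2) :=
              mul_le_mul (ih _ (by omega)) (ih _ (by omega)) (mul_nonneg (by positivity) (ht _))
                (mul_nonneg (pow_nonneg hK _) (Nat.cast_nonneg _))
          _ = K ^ (n + 2) * ↑(catalan p.1 * catalan p.2) := by
              rw [← hpn]; push_cast; ring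
      have hlast : a * (2 * a * t n) ≤ K / 2 * (K ^ (n + 1) * catalan (n + 1)) := by
        have hcat : (catalan n : ℝ) ≤ catalan (n + 1) := by
          exact_mod_cast catalan_le_catalan_succ n
        exact mul_le_mul (by linarith)
          ((ih n n.lt_succ_self).trans (mul_le_mul_of_nonneg_left hcat (pow_nonneg hK _)))
          (mul_nonneg (by positivity) (ht n)) (by linarith)
      calc 2 * a * t (n + 1)
          ≤ 2 * a * (a * (∑ p ∈ antidiagonal n, t p.1 * t p.2 + t n)) := by
            gcongr; exact hrec n
        _ = (∑ p ∈ antidiagonal n, (2 * a * t p.1) * (2 * a * t p.2)) / 2 +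
              a * (2 * a * t n) := by
            rw [sum_div, mul_add, mul_sum, mul_add, mul_sum]
            congr 1
            · exact sum_congr rfl fun _ _ => by ring
            · ring
        _ ≤ K ^ (n + 2) * catalan (n + 1) / 2 + K / 2 * (K ^ (n + 1) * catalan (n + 1)) := by
            linarith
        _ = K ^ (n + 1 + 1) * catalan (n + 1) := by ring

theorem exists_pos_summable_mul_pow_of_le_geometric {s : ℕ → ℝ} {c B : ℝ}
    (hs : ∀ n, 0 ≤ s n) (hB : 0 < B) (hsB : ∀ n, s n ≤ c * B ^ n) :
    ∃ r : ℝ, 0 < r ∧ Summable fun n => s n * r ^ n := by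
  refine ⟨1 / (2 * B), by positivity, ?_⟩
  refine Summable.of_nonneg_of_le (fun n => mul_nonneg (hs n) (by positivity)) (fun n => ?_)
    (summable_geometric_two.mul_left c)
  calc s n * (1 / (2 * B)) ^ n ≤ c * B ^ n * (1 / (2 * B)) ^ n := by gcongr; exact hsB n
    _ = c * (1 / 2) ^ n := by rw [mul_assoc, ← mul_pow]; field_simp

/-- if `S = A_R(z+S) - R·S` then `S` satisfies the quadratic
`(R+R²)S² + (R²z+Rz-1)S + Rz = 0` and has a positive radius of convergence. -/
theorem stmt_10 (R : ℝ) (hR : 1 < R) (S : ℕ → ℝ) (hS : DomSeq S)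
    (heq : ∀ n, S n = ARcoeff R S n - R * S n) :
    PowerSeries.C (R + R ^ 2) * PowerSeries.mk S ^ 2 +
        (PowerSeries.C (R ^ 2) * PowerSeries.X + PowerSeries.C R * PowerSeries.X - 1) *
          PowerSeries.mk S +
        PowerSeries.C R * PowerSeries.X = 0 ∧
      ∃ r : ℝ, 0 < r ∧ Summable fun n => S n * r ^ n := by
  obtain ⟨hS0, hS_nonneg⟩ := hS
  have hquad := quadratic_of_eq_ARcoeff hS0 heq
  refine ⟨hquad, ?_⟩
  obtain ⟨hS1, hrec⟩ := recurrence_of_quadratic hS0 hquad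
  have ha : 0 < R + R ^ 2 := by positivity
  have hcatalan := le_pow_mul_catalan_of_recurrence (t := fun n => S (n + 1))
    (K := 2 * (R + R ^ 2) * R) (fun n => hS_nonneg _) ha.le (by nlinarith) (by rw [hS1])
    fun n => (hrec n).le
  refine exists_pos_summable_mul_pow_of_le_geometric hS_nonneg (c := 1 / (2 * (R + R ^ 2)))
    (B := 4 * (2 * (R + R ^ 2) * R)) (by positivity) fun n => ?_
  cases n with
  | zero => rw [hS0, pow_zero, mul_one]; positivity
  | succ n =>
    have hcat : (catalan n : ℝ) ≤ 4 ^ (n + 1) := by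
      exact_mod_cast (catalan_le_four_pow n).trans (Nat.pow_le_pow_right (by norm_num) n.le_succ)
    rw [mul_pow, one_div_mul_eq_div, le_div_iff₀ (by positivity), mul_comm]
    calc 2 * (R + R ^ 2) * S (n + 1)
        ≤ (2 * (R + R ^ 2) * R) ^ (n + 1) * catalan n := hcatalan n
      _ ≤ 4 ^ (n + 1) * (2 * (R + R ^ 2) * R) ^ (n + 1) := by
        rw [mul_comm]; gcongr
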